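/- arXiv:2208.14821 — 3 statements merged into one kernel-verified Lean document; each statement's English description precedes it below -/
import Mathlib

section
/- Let D be a vertex-transitive digraph with no directed cycles, and suppose there is a directed line L = …v_{−1}v_0v_1… in D. Then for n ≥ 1 and i ≠ j, the δ_n-classes of v_i and v_j are distinct; hence the quotient digraph D/δ_n is infinite. -/
variable {V : Type*}

/-- Directed walks of length `n` (`n`-arcs). -/
def arcOf (E : V → V → Prop) : ℕ → V → V → Prop
  | 0 => fun x y => x = y
  | n + 1 => fun x y => ∃ z, E x z ∧ arcOf E n z y

/-- Vertices reachable from `x` by a directed path of length exactly `n`. -/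
def descN (E : V → V → Prop) (n : ℕ) (x : V) : Set V := {y | arcOf E n x y}

/-- The descendant set of `x` (including `x` itself). -/
def desc (E : V → V → Prop) (x : V) : Set V := {y | ∃ n, arcOf E n x y}

theorem self_mem_desc (E : V → V → Prop) (x : V) : x ∈ desc E x := ⟨0, by simp [arcOf]⟩

def descSet (E : V → V → Prop) (S : Set V) : Set V := ⋃ x ∈ S, desc E x

theorem self_mem_descSet (E : V → V → Prop) {S : Set V} {x : V} (hx : x ∈ S) :
    x ∈ descSet E S := Set.mem_biUnion hx (self_mem_desc E x)

def outSet (E : V → V → Prop) (x : V) : Set V := {y | E x y}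

def inSet (E : V → V → Prop) (x : V) : Set V := {y | E y x}

def IsAut (E : V → V → Prop) (g : Equiv.Perm V) : Prop := ∀ x y, E x y ↔ E (g x) (g y)

def Rooted (E : V → V → Prop) (α : V) : Prop := ∀ y, y ∈ desc E α

def P0 (E : V → V → Prop) (α : V) (m : ℕ) : Prop :=
  0 < m ∧ (∀ x, (outSet E x).Finite ∧ (outSet E x).ncard = m) ∧
    ∀ s t : ℕ, s ≠ t → Disjoint (descN E s α) (descN E t α)

def P1 (E : V → V → Prop) : Prop :=
  ∀ u : V, ∃ f : desc E u ≃ V, ∀ x y : desc E u, (E x.1 y.1 ↔ E (f x) (f y))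

def P2 (E : V → V → Prop) (α : V) : Prop :=
  ∀ i : ℕ, ∀ x ∈ descN E i α, ∀ y ∈ descN E i α,
    ∃ g : Equiv.Perm V, IsAut E g ∧ g α = α ∧ g x = y

def P3 (E : V → V → Prop) (α : V) : Prop :=
  ∀ i : ℕ, (descN E i α).ncard < (descN E (i + 1) α).ncard

def EdgeTrans (E : V → V → Prop) : Prop :=
  ∀ a b c d : V, E a b → E c d → ∃ g : Equiv.Perm V, IsAut E g ∧ g a = c ∧ g b = d

def VertexTrans (E : V → V → Prop) : Prop :=
  ∀ u v : V, ∃ g : Equiv.Perm V, IsAut E g ∧ g u = v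

def NoDirectedCycles (E : V → V → Prop) : Prop :=
  ∀ s : ℕ, 1 ≤ s → ∀ x : V, ¬ arcOf E s x x

def HasPropZ {W : Type*} (E : W → W → Prop) : Prop :=
  ∃ f : W → ℤ, Function.Surjective f ∧ ∀ x y : W, E x y → f y = f x + 1

def deltaSetoid (E : V → V → Prop) (n : ℕ) : Setoid V :=
  ⟨fun u v => descN E n u = descN E n v, ⟨fun _ => rfl, Eq.symm, Eq.trans⟩⟩

def QEdge (E : V → V → Prop) (n : ℕ)
    (A B : Quotient (deltaSetoid E n)) : Prop :=
  ∃ a b : V, Quotient.mk (deltaSetoid E n) a = A ∧ Quotient.mk (deltaSetoid E n) b = B ∧ E a b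

def cls (E : V → V → Prop) (n : ℕ) (v : V) : Set V := {u | descN E n u = descN E n v}

def QEdgeSet (E : V → V → Prop) (A B : Set V) : Prop := ∃ a ∈ A, ∃ b ∈ B, E a b

def WDH (E : V → V → Prop) : Prop :=
  VertexTrans E ∧
  ∀ (X Y : Finset V) (f : descSet E (↑X : Set V) ≃ descSet E (↑Y : Set V)),
    (∀ a b : descSet E (↑X : Set V), (E a.1 b.1 ↔ E (f a).1 (f b).1)) →
    ∃ g : Equiv.Perm V, IsAut E g ∧
      ∀ (x : V) (hx : x ∈ X), g x = (f ⟨x, self_mem_descSet E (by exact_mod_cast hx)⟩).1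

def EdgeT (E : V → V → Prop) := {p : V × V // E p.1 p.2}

def reachSetoid (E : V → V → Prop) : Setoid (EdgeT E) :=
  ⟨Relation.EqvGen (fun a b => a.1.1 = b.1.1 ∨ a.1.2 = b.1.2),
    Relation.EqvGen.is_equivalence _⟩

def AlSources (E : V → V → Prop) (A : Quotient (reachSetoid E)) : Set V :=
  {v | ∃ e : EdgeT E, Quotient.mk (reachSetoid E) e = A ∧ v = e.1.1}

def AlSinks (E : V → V → Prop) (A : Quotient (reachSetoid E)) : Set V :=
  {v | ∃ e : EdgeT E, Quotient.mk (reachSetoid E) e = A ∧ v = e.1.2}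

def AlEdge (E : V → V → Prop) (A B : Quotient (reachSetoid E)) : Prop :=
  ∃ v, v ∈ AlSinks E A ∧ v ∈ AlSources E B

theorem arcOf_add (E : V → V → Prop) (a b : ℕ) (x y : V) :
    arcOf E (a + b) x y ↔ ∃ z, arcOf E a x z ∧ arcOf E b z y := by
  induction a generalizing x with
  | zero => simp [arcOf]
  | succ a ih =>
    rw [Nat.succ_add]
    constructor
    · rintro ⟨w, hw, hwy⟩
      obtain ⟨z, hz1, hz2⟩ := (ih w).mp hwy
      exact ⟨z, ⟨w, hw, hz1⟩, hz2⟩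
    · rintro ⟨z, ⟨w, hw, hwz⟩, hzy⟩
      exact ⟨w, hw, (ih w).mpr ⟨z, hwz, hzy⟩⟩

theorem descN_eq_mono (E : V → V → Prop) {n : ℕ} {u v : V}
    (h : descN E n u = descN E n v) (k : ℕ) :
    descN E (n + k) u = descN E (n + k) v := by
  ext y
  simp only [descN, Set.mem_setOf_eq, arcOf_add]
  constructor
  · rintro ⟨z, hz, hzy⟩
    refine ⟨z, ?_, hzy⟩
    have hz' : z ∈ descN E n u := hz
    rwa [h] at hz'
  · rintro ⟨z, hz, hzy⟩
    refine ⟨z, ?_, hzy⟩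
    have hz' : z ∈ descN E n v := hz
    rwa [← h] at hz'

theorem arcOf_aut {E : V → V → Prop} {g : Equiv.Perm V} (hg : IsAut E g)
    (m : ℕ) (x y : V) : arcOf E m x y ↔ arcOf E m (g x) (g y) := by
  induction m generalizing x with
  | zero => simp [arcOf, g.injective.eq_iff]
  | succ m ih =>
    constructor
    · rintro ⟨z, hz, hzy⟩
      exact ⟨g z, (hg x z).mp hz, (ih z).mp hzy⟩
    · rintro ⟨z, hz, hzy⟩
      refine ⟨g.symm z, ?_, ?_⟩
      · have := (hg x (g.symm z)).mpr
        simp only [Equiv.apply_symm_apply] at this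
        exact this hz
      · have := (ih (g.symm z)).mpr
        simp only [Equiv.apply_symm_apply] at this
        exact this hzy

theorem descN_aut {E : V → V → Prop} {g : Equiv.Perm V} (hg : IsAut E g)
    (m : ℕ) (x : V) : descN E m (g x) = g '' descN E m x := by
  ext y
  simp only [descN, Set.mem_setOf_eq, Set.mem_image]
  constructor
  · intro h
    refine ⟨g.symm y, ?_, by simp⟩
    have := (arcOf_aut hg m x (g.symm y)).mpr
    simpa using this (by simpa using h)
  · rintro ⟨z, hz, rfl⟩
    exact (arcOf_aut hg m x z).mp hz

theorem arcOf_line {E : V → V → Prop} {L : ℤ → V}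
    (hL : ∀ i : ℤ, E (L i) (L (i + 1))) (t : ℤ) (s : ℕ) :
    arcOf E s (L t) (L (t + s)) := by
  induction s generalizing t with
  | zero => simp [arcOf]
  | succ s ih =>
    refine ⟨L (t + 1), hL t, ?_⟩
    have := ih (t + 1)
    convert this using 2
    push_cast
    ring

theorem line_key (E : V → V → Prop)
    (hvt : VertexTrans E) (hnc : NoDirectedCycles E)
    (L : ℤ → V) (hL : ∀ i : ℤ, E (L i) (L (i + 1)))
    {n : ℕ} (hn : 1 ≤ n) {i j : ℤ} (hij : i < j)
    (h : descN E n (L i) = descN E n (L j)) : False := by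
  set d : ℕ := (j - i).toNat with hd_def
  have hd1 : 1 ≤ d := by
    have : (0:ℤ) < j - i := by omega
    omega
  have hjd : j = i + (d : ℤ) := by
    have : ((j - i).toNat : ℤ) = j - i := Int.toNat_of_nonneg (by omega)
    omega
  -- class equality at every level ≥ n
  have hm : ∀ m : ℕ, n ≤ m → descN E m (L i) = descN E m (L j) := by
    intro m hmn
    have : m = n + (m - n) := by omega
    rw [this]
    exact descN_eq_mono E h _
  obtain ⟨g, hg, hgij⟩ := hvt (L i) (L j)
  -- the orbit stays in the same classes
  have hfix : ∀ m : ℕ, n ≤ m → ∀ t : ℕ,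
      descN E m (g^[t] (L i)) = descN E m (L i) := by
    intro m hmn t
    induction t with
    | zero => simp
    | succ t ih =>
      rw [Function.iterate_succ_apply', descN_aut hg, ih, ← descN_aut hg,
        hgij, ← hm m hmn]
  -- walks along the orbit
  have hstep : ∀ t : ℕ, arcOf E d (g^[t] (L i)) (g^[t+1] (L i)) := by
    intro t
    induction t with
    | zero =>
      simpa [hgij, ← hjd] using arcOf_line hL i d
    | succ t ih =>
      rw [Function.iterate_succ_apply' g t, Function.iterate_succ_apply' g (t+1)]
      exact (arcOf_aut hg d _ _).mp ih
  have harc : ∀ t : ℕ, arcOf E (t * d) (L i) (g^[t] (L i)) := by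
    intro t
    induction t with
    | zero => simp [arcOf]
    | succ t ih =>
      have : (t + 1) * d = t * d + d := by ring
      rw [this, arcOf_add]
      exact ⟨g^[t] (L i), ih, hstep t⟩
  -- closed walk
  have hw : g^[n] (L i) ∈ descN E (n * d) (L i) := harc n
  have hnd : n ≤ n * d := Nat.le_mul_of_pos_right n (by omega)
  rw [← hfix (n * d) hnd n] at hw
  exact hnc (n * d) (Nat.mul_pos hn hd1) _ hw

/-- along a directed line, distinct vertices lie in distinct
`δ_n`-classes; hence the quotient digraph is infinite. -/
theorem line_classes_distinct (E : V → V → Prop)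
    (hvt : VertexTrans E) (hnc : NoDirectedCycles E)
    (L : ℤ → V) (hL : ∀ i : ℤ, E (L i) (L (i + 1))) :
    ∀ n : ℕ, 1 ≤ n →
      (∀ i j : ℤ, i ≠ j → descN E n (L i) ≠ descN E n (L j)) ∧
      Infinite (Quotient (deltaSetoid E n)) := by
  intro n hn
  have key : ∀ i j : ℤ, i ≠ j → descN E n (L i) ≠ descN E n (L j) := by
    intro i j hij h
    rcases lt_or_gt_of_ne hij with hlt | hgt
    · exact line_key E hvt hnc L hL hn hlt h
    · exact line_key E hvt hnc L hL hn hgt h.symm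
  refine ⟨key, ?_⟩
  refine Infinite.of_injective (fun i : ℤ => Quotient.mk (deltaSetoid E n) (L i)) ?_
  intro i j hq
  by_contra hne
  exact key i j hne (Quotient.exact hq)
end

section
/- Let D be a connected digraph with property Z. Then the reachability relation on the edges of D is not universal; in fact, two edges (u,v) and (u',v') related by an alternating walk satisfy f(u) = f(u'), where f is a homomorphism onto Z, so there are infinitely many reachability classes. -/
variable {V : Type*}

/-- in a connected digraph with property Z, reachability-related edges
have sources at the same `ℤ`-level; hence there are infinitely many reachability
classes and the reachability relation is not universal. -/
theorem propZ_reachability_not_universal (E : V → V → Prop)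
    (hconn : ∀ u v : V, Relation.ReflTransGen (fun a b => E a b ∨ E b a) u v)
    (f : V → ℤ) (hsurj : Function.Surjective f)
    (hhom : ∀ x y : V, E x y → f y = f x + 1) :
    (∀ e e' : EdgeT E, (reachSetoid E).r e e' → f e.1.1 = f e'.1.1) ∧
    Infinite (Quotient (reachSetoid E)) ∧
    ¬ ∀ e e' : EdgeT E, (reachSetoid E).r e e' := by
  have key : ∀ e e' : EdgeT E, (reachSetoid E).r e e' → f e.1.1 = f e'.1.1 := by
    intro e e' h
    induction h with
    | rel a b hab =>
      rcases hab with h1 | h2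
      · rw [h1]
      · have ha := hhom a.1.1 a.1.2 a.2
        have hb := hhom b.1.1 b.1.2 b.2
        rw [h2] at ha
        omega
    | refl => rfl
    | symm _ _ _ ih => exact ih.symm
    | trans _ _ _ _ _ ih1 ih2 => exact ih1.trans ih2
  have hedge : ∀ v : V, ∃ e : EdgeT E, e.1.1 = v ∨ e.1.2 = v := by
    intro v
    obtain ⟨w, hw⟩ := hsurj (f v + 1)
    have hne : v ≠ w := by intro h; rw [h] at hw; omega
    rcases (hconn v w).cases_head with h | ⟨c, hc, _⟩
    · exact absurd h hne
    rcases hc with h | h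
    · exact ⟨⟨(v, c), h⟩, Or.inl rfl⟩
    · exact ⟨⟨(c, v), h⟩, Or.inr rfl⟩
  have hub : ∀ n : ℤ, ∃ e : EdgeT E, n ≤ f e.1.1 := by
    intro n
    obtain ⟨x, hx⟩ := hsurj (n + 1)
    obtain ⟨e, he | he⟩ := hedge x
    · exact ⟨e, by rw [he, hx]; omega⟩
    · have h2 := hhom e.1.1 e.1.2 e.2
      rw [he, hx] at h2
      exact ⟨e, by omega⟩
  have hinf : Infinite (Quotient (reachSetoid E)) := by
    by_contra hfin
    rw [not_infinite_iff_finite] at hfin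
    have hr : (Set.range (Quotient.lift (fun e : EdgeT E => f e.1.1) key)).Finite :=
      Set.finite_range _
    obtain ⟨m, hm⟩ := hr.bddAbove
    obtain ⟨e, he⟩ := hub (m + 1)
    have : f e.1.1 ≤ m := hm ⟨Quotient.mk _ e, rfl⟩
    omega
  refine ⟨key, hinf, ?_⟩
  intro hall
  obtain ⟨x0, _⟩ := hsurj 0
  obtain ⟨e0, _⟩ := hedge x0
  obtain ⟨e, he⟩ := hub (f e0.1.1 + 1)
  have := key e0 e (hall e0 e)
  omega
end

section
/- Let Γ be a rooted digraph satisfying P0, P1 and P2 with ultimate in-valency r_N. Then r_N divides the out-valency m of Γ. -/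
variable {V : Type*}

/-!
Count the arcs from level `j` to level `j + 1`: every vertex of level `j` sends `m` of them and,
since the levels are disjoint, every vertex of level `j + 1` receives `r (j + 1)` of them, all from
level `j`. Hence `n (j + 1) * r (j + 1) = n j * m` for the level sizes `n j`, and iterating past `N`
gives `n (N + k) * r N ^ k = n N * m ^ k`. So `r N ^ k ∣ n N * m ^ k` for every `k`, where
`n N ≠ 0` since the levels are nonempty. This forces `r N ∣ m`: otherwise some prime occurs in
`r N` more often than in `m`, and the excess of its multiplicity in `r N ^ k` over `m ^ k` grows
with `k`.
-/

theorem Nat.dvd_of_forall_pow_dvd_mul_pow {a r m : ℕ} (ha : a ≠ 0)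
    (h : ∀ k : ℕ, r ^ k ∣ a * m ^ k) : r ∣ m := by
  rcases eq_or_ne m 0 with rfl | hm
  · exact dvd_zero r
  have hr : r ≠ 0 := by
    rintro rfl
    simpa [ha, hm] using h 1
  rw [← Nat.factorization_le_iff_dvd hr hm]
  intro p
  by_contra! hlt
  have hp := (Nat.factorization_le_iff_dvd (pow_ne_zero _ hr) (by positivity)).2
    (h (a.factorization p + 1)) p
  simp only [Nat.factorization_pow, Nat.factorization_mul ha (pow_ne_zero _ hm),
    Finsupp.coe_add, Finsupp.coe_smul, Pi.add_apply, Pi.smul_apply, smul_eq_mul] at hp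
  nlinarith

theorem mul_pow_eq_mul_pow_of_forall_mul_eq_mul {a : ℕ → ℕ} {r m : ℕ}
    (h : ∀ j, a (j + 1) * r = a j * m) (k : ℕ) : a k * r ^ k = a 0 * m ^ k := by
  induction k with
  | zero => simp
  | succ k ih =>
    calc a (k + 1) * r ^ (k + 1) = a (k + 1) * r * r ^ k := by ring
      _ = a k * r ^ k * m := by rw [h]; ring
      _ = a 0 * m ^ (k + 1) := by rw [ih]; ring

variable {E : V → V → Prop}

theorem ncard_mul_eq_ncard_mul_of_biregular {A B : Set V} (hA : A.Finite) (hB : B.Finite)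
    {m r : ℕ} (hout : ∀ a ∈ A, outSet E a ⊆ B ∧ (outSet E a).ncard = m)
    (hin : ∀ b ∈ B, inSet E b ⊆ A ∧ (inSet E b).ncard = r) :
    A.ncard * m = B.ncard * r := by
  classical
  rw [← hA.coe_toFinset, ← hB.coe_toFinset, Set.ncard_coe_finset, Set.ncard_coe_finset]
  refine Finset.card_mul_eq_card_mul E (fun a ha => ?_) (fun b hb => ?_)
  · obtain ⟨hsub, hcard⟩ := hout a (hA.mem_toFinset.1 ha)
    rw [← hcard, ← Set.ncard_coe_finset, Finset.coe_bipartiteAbove]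
    exact congrArg Set.ncard <|
      Set.ext fun b => ⟨And.right, fun h => ⟨hB.mem_toFinset.2 (hsub h), h⟩⟩
  · obtain ⟨hsub, hcard⟩ := hin b (hB.mem_toFinset.1 hb)
    rw [← hcard, ← Set.ncard_coe_finset, Finset.coe_bipartiteBelow]
    exact congrArg Set.ncard <|
      Set.ext fun a => ⟨And.right, fun h => ⟨hA.mem_toFinset.2 (hsub h), h⟩⟩

theorem arcOf_succ_iff' {n : ℕ} {x y : V} :
    arcOf E (n + 1) x y ↔ ∃ z, arcOf E n x z ∧ E z y := by
  induction n generalizing x with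
  | zero =>
    constructor
    · rintro ⟨z, hz, rfl⟩; exact ⟨x, rfl, hz⟩
    · rintro ⟨z, rfl, he⟩; exact ⟨y, he, rfl⟩
  | succ n ih =>
    constructor
    · rintro ⟨w, hw, ha⟩
      obtain ⟨z, hz, he⟩ := ih.1 ha
      exact ⟨z, ⟨w, hw, hz⟩, he⟩
    · rintro ⟨z, ⟨w, hw, hz⟩, he⟩
      exact ⟨w, hw, ih.2 ⟨z, hz, he⟩⟩

theorem descN_zero (x : V) : descN E 0 x = {x} := by
  ext y
  exact eq_comm

theorem descN_succ (n : ℕ) (x : V) : descN E (n + 1) x = ⋃ z ∈ descN E n x, outSet E z := by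
  ext y
  simp only [descN, outSet, Set.mem_ofPred_eq, Set.mem_iUnion, exists_prop]
  exact arcOf_succ_iff'

theorem outSet_subset_descN_succ {n : ℕ} {x z : V} (hz : z ∈ descN E n x) :
    outSet E z ⊆ descN E (n + 1) x := by
  rw [descN_succ]
  exact Set.subset_biUnion_of_mem hz

theorem descN_finite (hfin : ∀ x, (outSet E x).Finite) (n : ℕ) (x : V) :
    (descN E n x).Finite := by
  induction n with
  | zero => simp [descN_zero]
  | succ n ih => simpa only [descN_succ] using ih.biUnion fun z _ => hfin z

theorem descN_nonempty (hne : ∀ x, (outSet E x).Nonempty) (n : ℕ) (x : V) :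
    (descN E n x).Nonempty := by
  induction n with
  | zero => simp [descN_zero]
  | succ n ih =>
    obtain ⟨z, hz⟩ := ih
    exact (hne z).mono (outSet_subset_descN_succ hz)

theorem inSet_subset_descN {α : V} (hroot : Rooted E α)
    (hdisj : ∀ s t : ℕ, s ≠ t → Disjoint (descN E s α) (descN E t α))
    {n : ℕ} {y : V} (hy : y ∈ descN E (n + 1) α) : inSet E y ⊆ descN E n α := by
  intro z hz
  obtain ⟨s, hs⟩ := hroot z
  obtain rfl : s = n := by
    by_contra hne
    exact Set.disjoint_left.1 (hdisj (s + 1) (n + 1) (by omega))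
      (outSet_subset_descN_succ hs hz) hy
  exact hs

theorem ncard_descN_succ_mul {α : V} {m r : ℕ} (hroot : Rooted E α)
    (hout : ∀ x, (outSet E x).Finite ∧ (outSet E x).ncard = m)
    (hdisj : ∀ s t : ℕ, s ≠ t → Disjoint (descN E s α) (descN E t α))
    (n : ℕ) (hin : ∀ y ∈ descN E (n + 1) α, (inSet E y).ncard = r) :
    (descN E (n + 1) α).ncard * r = (descN E n α).ncard * m := by
  have hfin := descN_finite (fun x => (hout x).1)
  exact (ncard_mul_eq_ncard_mul_of_biregular (hfin n α) (hfin (n + 1) α)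
    (fun x hx => ⟨outSet_subset_descN_succ hx, (hout x).2⟩)
    (fun y hy => ⟨inSet_subset_descN hroot hdisj hy, hin y hy⟩)).symm

theorem ultimate_invalency_dvd_general (E : V → V → Prop) (α : V) (m N : ℕ) (r : ℕ → ℕ)
    (hroot : Rooted E α) (h0 : P0 E α m)
    (hr : ∀ i : ℕ, 1 ≤ i → ∀ x ∈ descN E i α, (inSet E x).ncard = r i)
    (hNconst : ∀ j : ℕ, N ≤ j → r j = r N) :
    r N ∣ m := by
  obtain ⟨hm, hout, hdisj⟩ := h0
  set n : ℕ → ℕ := fun k => (descN E (N + k) α).ncard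
  have hstep (k : ℕ) : n (k + 1) * r N = n k * m := by
    rw [← hNconst (N + k + 1) (by omega)]
    exact ncard_descN_succ_mul hroot hout hdisj (N + k) (hr _ (by omega))
  have hn0 : n 0 ≠ 0 := by
    have hne x : (outSet E x).Nonempty :=
      Set.nonempty_of_ncard_ne_zero (by rw [(hout x).2]; omega)
    exact ((descN_nonempty hne _ α).ncard_pos (descN_finite (fun x => (hout x).1) _ α)).ne'
  refine Nat.dvd_of_forall_pow_dvd_mul_pow hn0 fun k => ⟨n k, ?_⟩
  rw [← mul_pow_eq_mul_pow_of_forall_mul_eq_mul hstep k, mul_comm]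

/-- the ultimate in-valency divides the out-valency. -/
theorem ultimate_invalency_dvd (E : V → V → Prop) (α : V) (m N : ℕ) (r : ℕ → ℕ)
    (hroot : Rooted E α) (h0 : P0 E α m) (h1 : P1 E) (h2 : P2 E α)
    (hr : ∀ i : ℕ, 1 ≤ i → ∀ x ∈ descN E i α, (inSet E x).ncard = r i)
    (hN1 : 1 ≤ N) (hNconst : ∀ j : ℕ, N ≤ j → r j = r N) :
    r N ∣ m :=
  ultimate_invalency_dvd_general E α m N r hroot h0 hr hNconst
end
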